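/- The function u(x,t) = 3β sech²((√β/2)(x − βt − aW(t))) is a pathwise solution of the stochastic KdV equation d_t u + (u u_x + u_{xxx}) dt + a u_x ∘ dW_t = 0 for every β > 0 and a ∈ ℝ. -/

import Mathlib

/-!
In the moving frame `ξ = x - βt - aW(t)` the chain rule turns `∂ₜu` into `-(β + aW'(t)) f'(ξ)`,
so the noise term cancels and the equation reduces to the travelling-wave ODE
`-βf' + ff' + f''' = 0` for the profile `f`. For `f(ξ) = 3β sech²(cξ) = 3β (1 - tanh²(cξ))`
every derivative is a polynomial in `T = tanh(cξ)`, because `tanh' = 1 - tanh²`, and the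
left-hand side of the ODE works out to `6βcT(1 - T²)(3T² - 2)(β - 4c²)`, which vanishes for
`c = √β / 2`.
-/

/-- The soliton profile in the stochastic moving frame:
`u(t,x) = 3β sech²((√β/2)(x − βt − aW(t)))`. -/
noncomputable def soliton (β a : ℝ) (W : ℝ → ℝ) (t x : ℝ) : ℝ :=
  3 * β * (1 / Real.cosh (Real.sqrt β / 2 * (x - β * t - a * W t))) ^ 2

open Real Polynomial

theorem Real.hasDerivAt_tanh (x : ℝ) : HasDerivAt tanh (1 - tanh x ^ 2) x := by
  have hcosh : cosh x ≠ 0 := (cosh_pos x).ne'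
  have h := (hasDerivAt_sinh x).div (hasDerivAt_cosh x) hcosh
  rw [show sinh / cosh = tanh from funext fun y => (tanh_eq_sinh_div_cosh y).symm] at h
  refine h.congr_deriv ?_
  rw [tanh_eq_sinh_div_cosh]
  field_simp

theorem Real.one_div_cosh_sq (x : ℝ) : (1 / cosh x) ^ 2 = 1 - tanh x ^ 2 := by
  have hcosh : cosh x ≠ 0 := (cosh_pos x).ne'
  rw [tanh_eq_sinh_div_cosh]
  field_simp
  linear_combination -cosh_sq x

theorem hasDerivAt_eval_tanh_mul (p : ℝ[X]) (c ξ : ℝ) :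
    HasDerivAt (fun ξ => p.eval (tanh (c * ξ)))
      ((C c * (1 - X ^ 2) * derivative p).eval (tanh (c * ξ))) ξ := by
  have h := (p.hasDerivAt _).comp ξ
    ((hasDerivAt_tanh (c * ξ)).comp ξ ((hasDerivAt_id ξ).const_mul c))
  refine h.congr_deriv ?_
  simp only [Function.comp_apply, mul_one, eval_mul, eval_C, eval_sub, eval_one, eval_pow, eval_X]
  ring

theorem deriv_eval_tanh_mul (p : ℝ[X]) (c : ℝ) :
    deriv (fun ξ => p.eval (tanh (c * ξ)))
      = fun ξ => (C c * (1 - X ^ 2) * derivative p).eval (tanh (c * ξ)) :=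
  funext fun ξ => (hasDerivAt_eval_tanh_mul p c ξ).deriv

noncomputable def solitonProfile (β ξ : ℝ) : ℝ :=
  3 * β * (1 / cosh (√β / 2 * ξ)) ^ 2

theorem solitonProfile_eq_eval_tanh (β : ℝ) :
    solitonProfile β = fun ξ => (C (3 * β) * (1 - X ^ 2)).eval (tanh (√β / 2 * ξ)) := by
  funext ξ
  rw [solitonProfile, one_div_cosh_sq]
  simp only [map_mul, eval_mul, eval_C, eval_sub, eval_one, eval_pow, eval_X]

theorem differentiable_solitonProfile (β : ℝ) : Differentiable ℝ (solitonProfile β) := by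
  rw [solitonProfile_eq_eval_tanh]
  exact fun ξ => (hasDerivAt_eval_tanh_mul _ _ ξ).differentiableAt

theorem solitonProfile_travellingWave {β : ℝ} (hβ : 0 ≤ β) (ξ : ℝ) :
    -β * deriv (solitonProfile β) ξ + solitonProfile β ξ * deriv (solitonProfile β) ξ
      + deriv (deriv (deriv (solitonProfile β))) ξ = 0 := by
  have hc : (√β / 2) ^ 2 = β / 4 := by rw [div_pow, sq_sqrt hβ]; norm_num
  simp only [solitonProfile_eq_eval_tanh, deriv_eval_tanh_mul]
  set T := tanh (√β / 2 * ξ)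
  simp only [map_mul, derivative_mul, derivative_C, zero_mul, mul_zero, add_zero,
    derivative_sub, derivative_one, derivative_X_pow_succ, Nat.cast_one, map_add, map_one, pow_one,
    zero_sub, mul_neg, zero_add, eval_neg, eval_mul, eval_C, eval_sub, eval_one, eval_pow, eval_X,
    eval_add, neg_mul, neg_neg, derivative_neg, derivative_X, mul_one, neg_add_rev]
  linear_combination (-24 * β * (√β / 2) * T * (1 - T ^ 2) * (3 * T ^ 2 - 2)) * hc

theorem stochasticKdV_of_travellingWave {f W : ℝ → ℝ} {β a t x : ℝ}
    (hf : DifferentiableAt ℝ f (x - β * t - a * W t)) (hW : DifferentiableAt ℝ W t)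
    (hode : -β * deriv f (x - β * t - a * W t)
      + f (x - β * t - a * W t) * deriv f (x - β * t - a * W t)
      + deriv (deriv (deriv f)) (x - β * t - a * W t) = 0) :
    deriv (fun s => f (x - β * s - a * W s)) t
      + f (x - β * t - a * W t) * deriv (fun y => f (y - β * t - a * W t)) x
      + deriv (deriv (deriv (fun y => f (y - β * t - a * W t)))) x
      + a * deriv (fun y => f (y - β * t - a * W t)) x * deriv W t = 0 := by
  have hframe : HasDerivAt (fun s => x - β * s - a * W s) (-(β * 1) - a * deriv W t) t :=
    (((hasDerivAt_id t).const_mul β).const_sub x).sub (hW.hasDerivAt.const_mul a)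
  have htime : deriv (fun s => f (x - β * s - a * W s)) t
      = deriv f (x - β * t - a * W t) * (-(β * 1) - a * deriv W t) :=
    (hf.hasDerivAt.comp t hframe).deriv
  have hshift : ∀ g : ℝ → ℝ, deriv (fun y => g (y - (β * t + a * W t)))
      = fun y => deriv g (y - (β * t + a * W t)) := fun g => funext fun y => deriv_comp_sub_const ..
  rw [htime]
  simp only [sub_sub] at hode ⊢
  rw [hshift, hshift, hshift]
  linear_combination hode

/-- **Stochastic travelling wave solution of the KdV equation.**
For every `β > 0` and `a ∈ ℝ`, the function
`u(x,t) = 3β sech²((√β/2)(x − βt − aW(t)))` is a pathwise solution of the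
stochastic KdV equation `d_t u + (u u_x + u_{xxx}) dt + a u_x ∘ dW_t = 0`
(the noise being Stratonovich, the ordinary chain rule applies, so the equation
is expressed pathwise along differentiable driving paths `W`). -/
theorem stmt12 (β a : ℝ) (hβ : 0 < β) (W : ℝ → ℝ) (hW : Differentiable ℝ W) :
    ∀ t x : ℝ,
      deriv (fun s => soliton β a W s x) t
        + soliton β a W t x * deriv (fun y => soliton β a W t y) x
        + deriv (deriv (deriv (fun y => soliton β a W t y))) x
        + a * deriv (fun y => soliton β a W t y) x * deriv W t = 0 := by
  intro t x
  -- `soliton β a W t x` unfolds to `solitonProfile β (x - β * t - a * W t)`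
  exact stochasticKdV_of_travellingWave (differentiable_solitonProfile β _) (hW t)
    (solitonProfile_travellingWave hβ.le _)
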